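/- Let f(x) = (1/√(2π))·exp(-x²/2) and Φ(x) = ∫_{-∞}^x f(t) dt be the standard normal cdf. Then for all real x, Φ(x)/(2f(x)) > 1/(-x + √(x²+4)). -/

import Mathlib

open Real MeasureTheory Set

noncomputable def stdNormalPdf (x : ℝ) : ℝ := (Real.sqrt (2 * Real.pi))⁻¹ * Real.exp (-x ^ 2 / 2)

noncomputable def gaussQ (x : ℝ) : ℝ := ∫ t in Set.Ici x, stdNormalPdf t

noncomputable def gaussPhi (x : ℝ) : ℝ := ∫ t in Set.Iic x, stdNormalPdf t

/-!
Let `k(x) = (x + √(x² + 4)) / 2` be the positive root of `k² = x k + 1`, so that the right-hand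
side equals `k(x) / 2` and the claim reads `Φ(x) > k(x) f(x)`. Since `f' = -x f` and
`k' = k / √(x² + 4)`, the difference `Φ - k f` has derivative `f k³ / √(x² + 4) > 0`, so it is
strictly increasing; as `k f → 0` at `-∞` and `Φ ≥ 0`, it is positive everywhere.
-/

open Filter Topology ProbabilityTheory

noncomputable def posRoot (x : ℝ) : ℝ := (x + √(x ^ 2 + 4)) / 2

lemma sqrt_sq_add_four_eq (x : ℝ) : √(x ^ 2 + 4) = 2 * posRoot x - x := by
  unfold posRoot; ring

lemma posRoot_sq (x : ℝ) : posRoot x ^ 2 = x * posRoot x + 1 := by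
  have h : √(x ^ 2 + 4) ^ 2 = x ^ 2 + 4 := sq_sqrt (by positivity)
  rw [sqrt_sq_add_four_eq] at h
  linear_combination h / 4

lemma posRoot_mul_sub_self (x : ℝ) : posRoot x * (posRoot x - x) = 1 := by
  linear_combination posRoot_sq x

lemma posRoot_pos (x : ℝ) : 0 < posRoot x := by
  have h : |x| < √(x ^ 2 + 4) := (lt_sqrt (abs_nonneg x)).2 (by rw [sq_abs]; linarith)
  unfold posRoot
  linarith [neg_abs_le x]

lemma hasDerivAt_posRoot (x : ℝ) : HasDerivAt posRoot (posRoot x / √(x ^ 2 + 4)) x := by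
  have hs : HasDerivAt (fun y => √(y ^ 2 + 4)) (2 * x / (2 * √(x ^ 2 + 4))) x := by
    simpa using ((hasDerivAt_pow 2 x).add_const 4).sqrt (by positivity)
  refine (((hasDerivAt_id x).add hs).div_const 2).congr_deriv ?_
  have : 0 < √(x ^ 2 + 4) := sqrt_pos.2 (by positivity)
  unfold posRoot
  field_simp
  ring

lemma tendsto_posRoot_atBot : Tendsto posRoot atBot (𝓝 0) := by
  have hinv : posRoot = fun y => (posRoot y - y)⁻¹ := by
    ext y
    exact eq_inv_of_mul_eq_one_left (posRoot_mul_sub_self y)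
  have hgap : Tendsto (fun y => posRoot y - y) atBot atTop :=
    tendsto_atTop_mono (fun y => by linarith [posRoot_pos y]) tendsto_neg_atBot_atTop
  rw [hinv]
  exact tendsto_inv_atTop_zero.comp hgap

lemma stdNormalPdf_eq_gaussianPDFReal : stdNormalPdf = gaussianPDFReal 0 1 := by
  ext x; simp [stdNormalPdf, gaussianPDFReal]

lemma stdNormalPdf_pos (x : ℝ) : 0 < stdNormalPdf x := by
  rw [stdNormalPdf_eq_gaussianPDFReal]; exact gaussianPDFReal_pos _ _ _ one_ne_zero

lemma integrable_stdNormalPdf : Integrable stdNormalPdf := by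
  rw [stdNormalPdf_eq_gaussianPDFReal]; exact integrable_gaussianPDFReal _ _

lemma hasDerivAt_stdNormalPdf (x : ℝ) : HasDerivAt stdNormalPdf (-x * stdNormalPdf x) x := by
  have h : HasDerivAt (fun y : ℝ => -y ^ 2 / 2) (-x) x := by
    refine (((hasDerivAt_pow 2 x).neg).div_const 2).congr_deriv ?_
    push_cast; ring
  refine (h.exp.const_mul (√(2 * π))⁻¹).congr_deriv ?_
  unfold stdNormalPdf; ring

lemma tendsto_stdNormalPdf_atBot : Tendsto stdNormalPdf atBot (𝓝 0) := by
  have h : Tendsto (fun y : ℝ => -y ^ 2 / 2) atBot atBot := by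
    have hsq : Tendsto (fun y : ℝ => y ^ 2) atBot atTop := by
      simpa [Function.comp_def] using
        (tendsto_pow_atTop (α := ℝ) two_ne_zero).comp tendsto_neg_atBot_atTop
    simpa only [Function.comp_def, neg_div] using
      tendsto_neg_atTop_atBot.comp (hsq.atTop_div_const two_pos)
  unfold stdNormalPdf
  simpa only [mul_zero, Function.comp_def] using (tendsto_exp_atBot.comp h).const_mul (√(2 * π))⁻¹

theorem hasDerivAt_integral_Iic {E : Type*} [NormedAddCommGroup E] [NormedSpace ℝ E]
    [CompleteSpace E] {f : ℝ → E} (hf : Continuous f) (hfi : Integrable f) (x : ℝ) :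
    HasDerivAt (fun u => ∫ t in Iic u, f t) (f x) x := by
  have hsplit : (fun u => ∫ t in Iic u, f t) =
      fun u => (∫ t in Iic 0, f t) + ∫ t in (0 : ℝ)..u, f t := by
    ext u
    rw [← intervalIntegral.integral_Iic_sub_Iic hfi.integrableOn hfi.integrableOn]
    abel
  rw [hsplit]
  exact (intervalIntegral.integral_hasDerivAt_right hfi.intervalIntegrable
    hf.stronglyMeasurable.stronglyMeasurableAtFilter hf.continuousAt).const_add _

lemma hasDerivAt_gaussPhi (x : ℝ) : HasDerivAt gaussPhi (stdNormalPdf x) x :=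
  hasDerivAt_integral_Iic (by unfold stdNormalPdf; fun_prop) integrable_stdNormalPdf x

lemma gaussPhi_nonneg (x : ℝ) : 0 ≤ gaussPhi x :=
  setIntegral_nonneg measurableSet_Iic fun t _ => (stdNormalPdf_pos t).le

lemma hasDerivAt_gaussPhi_sub_posRoot_mul (x : ℝ) :
    HasDerivAt (fun y => gaussPhi y - posRoot y * stdNormalPdf y)
      (stdNormalPdf x * posRoot x ^ 3 / √(x ^ 2 + 4)) x := by
  -- with `s = 2k - x` and `k² = x k + 1`, `f - (k / s) f + x k f` collapses to `f k³ / s`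
  refine ((hasDerivAt_gaussPhi x).sub
    ((hasDerivAt_posRoot x).mul (hasDerivAt_stdNormalPdf x))).congr_deriv ?_
  have hs : 0 < √(x ^ 2 + 4) := sqrt_pos.2 (by positivity)
  field_simp
  rw [sqrt_sq_add_four_eq]
  linear_combination stdNormalPdf x * (x - posRoot x) * posRoot_sq x

lemma strictMono_gaussPhi_sub_posRoot_mul :
    StrictMono fun y => gaussPhi y - posRoot y * stdNormalPdf y :=
  strictMono_of_deriv_pos fun x => by
    rw [(hasDerivAt_gaussPhi_sub_posRoot_mul x).deriv]
    have := posRoot_pos x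
    have := stdNormalPdf_pos x
    positivity

lemma posRoot_mul_stdNormalPdf_lt_gaussPhi (x : ℝ) : posRoot x * stdNormalPdf x < gaussPhi x := by
  have hlim : Tendsto (fun y => -(posRoot y * stdNormalPdf y)) atBot (𝓝 0) := by
    simpa using (tendsto_posRoot_atBot.mul tendsto_stdNormalPdf_atBot).neg
  have hle : 0 ≤ gaussPhi (x - 1) - posRoot (x - 1) * stdNormalPdf (x - 1) := by
    refine le_of_tendsto hlim ?_
    filter_upwards [eventually_le_atBot (x - 1)] with y hy
    linarith [gaussPhi_nonneg y, strictMono_gaussPhi_sub_posRoot_mul.monotone hy]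
  linarith [strictMono_gaussPhi_sub_posRoot_mul (sub_one_lt x)]

lemma one_div_neg_add_sqrt_eq (x : ℝ) : 1 / (-x + √(x ^ 2 + 4)) = posRoot x / 2 := by
  have h := posRoot_mul_sub_self x
  have hgap : 0 < posRoot x - x := pos_of_mul_pos_right (h ▸ one_pos) (posRoot_pos x).le
  rw [sqrt_sq_add_four_eq, div_eq_div_iff (by linarith) two_ne_zero]
  linear_combination -2 * h

theorem stmt4 (x : ℝ) :
    gaussPhi x / (2 * stdNormalPdf x) > 1 / (-x + Real.sqrt (x ^ 2 + 4)) := by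
  rw [one_div_neg_add_sqrt_eq, gt_iff_lt, lt_div_iff₀ (mul_pos two_pos (stdNormalPdf_pos x))]
  linarith [posRoot_mul_stdNormalPdf_lt_gaussPhi x]
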